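/- arXiv:2102.02544 — 10 statements merged into one kernel-verified Lean document; each statement's English description precedes it below -/
import Mathlib

section
/- The F-linear span (inside A) of the n evaluations {(Λ·P − Λ·R)(a_ℓ) : 1 ≤ ℓ ≤ n}, obtained by substituting X = a_ℓ in the polynomial Λ·P − Λ·R ∈ A[X], is equal to the F-linear span of the n coefficients {coeff(Λ·P − Λ·R mod G, X^u) : 0 ≤ u ≤ n−1} of the remainder of Λ·P − Λ·R upon division by the monic polynomial G. (In other words, the bilinear decoding system P(a_ℓ)Λ(a_ℓ) = b_ℓΛ(a_ℓ), ℓ = 1,…,n, and the key-equation system Λ·P ≡ Λ·R mod G are obtained from each other by linear combinations.) -/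
open Polynomial

noncomputable def Lam (F : Type*) [CommRing F] (t k : ℕ) :
    Polynomial (MvPolynomial (Fin t ⊕ Fin k) F) :=
  X ^ t + ∑ j : Fin t, C (MvPolynomial.X (Sum.inl j)) * X ^ (j : ℕ)

noncomputable def Pp (F : Type*) [CommRing F] (t k : ℕ) :
    Polynomial (MvPolynomial (Fin t ⊕ Fin k) F) :=
  ∑ i : Fin k, C (MvPolynomial.X (Sum.inr i)) * X ^ (i : ℕ)

noncomputable def liftP (F : Type*) [CommRing F] (t k : ℕ) (f : Polynomial F) :
    Polynomial (MvPolynomial (Fin t ⊕ Fin k) F) :=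
  f.map MvPolynomial.C

/-!
Reducing modulo `G` does not change the values at the roots `a ℓ` of `G`, and the remainder
has degree `< n`. So its `n` values are the image of its `n` coefficients under the
Vandermonde matrix of the distinct points `a ℓ`, which is invertible over `F`; hence each
family is an `F`-linear combination of the other.
-/

theorem Submodule.span_range_eq_of_eq_sum_smul {R V ι : Type*} [CommRing R] [AddCommMonoid V]
    [Module R V] [Fintype ι] [DecidableEq ι] (M : Matrix ι ι R) (hM : IsUnit M.det) (c e : ι → V)
    (he : ∀ i, e i = ∑ j, M i j • c j) :
    Submodule.span R (Set.range e) = Submodule.span R (Set.range c) := by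
  have hc : ∀ i, c i = ∑ j, M⁻¹ i j • e j := fun i => by
    simp_rw [he, Finset.smul_sum, smul_smul]
    rw [Finset.sum_comm]
    simp_rw [← Finset.sum_smul, ← Matrix.mul_apply, M.nonsing_inv_mul hM, Matrix.one_apply,
      ite_smul, one_smul, zero_smul, Finset.sum_ite_eq, Finset.mem_univ, if_true]
  apply le_antisymm <;> rw [Submodule.span_le] <;> rintro _ ⟨i, rfl⟩
  · rw [he i]
    exact Submodule.sum_mem _ fun j _ => Submodule.smul_mem _ _ (Submodule.subset_span ⟨j, rfl⟩)
  · rw [hc i]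
    exact Submodule.sum_mem _ fun j _ => Submodule.smul_mem _ _ (Submodule.subset_span ⟨j, rfl⟩)

section

variable {F A : Type*} [Field F] [CommRing A] [Algebra F A]

theorem Polynomial.eval_algebraMap_eq_sum_smul_coeff {n : ℕ} {Q : A[X]} (hQ : Q.degree < n)
    (x : F) : Q.eval (algebraMap F A x) = ∑ w : Fin n, x ^ (w : ℕ) • Q.coeff w := by
  rw [eval_eq_sum_degreeLTEquiv (mem_degreeLT.2 hQ)]
  refine Finset.sum_congr rfl fun w _ => ?_
  rw [Algebra.smul_def, map_pow, mul_comm]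
  rfl

theorem Polynomial.span_eval_eq_span_coeff {n : ℕ} {a : Fin n → F} (ha : Function.Injective a)
    {Q : A[X]} (hQ : Q.degree < n) :
    Submodule.span F (Set.range fun ℓ => Q.eval (algebraMap F A (a ℓ))) =
      Submodule.span F (Set.range fun u : Fin n => Q.coeff u) :=
  Submodule.span_range_eq_of_eq_sum_smul (Matrix.vandermonde a)
    (isUnit_iff_ne_zero.2 (Matrix.det_vandermonde_ne_zero_iff.2 ha)) _ _
    fun ℓ => eval_algebraMap_eq_sum_smul_coeff hQ (a ℓ)

theorem Polynomial.span_eval_eq_span_coeff_modByMonic {n : ℕ} {a : Fin n → F}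
    (ha : Function.Injective a) (H : A[X]) :
    Submodule.span F (Set.range fun ℓ => H.eval (algebraMap F A (a ℓ))) =
      Submodule.span F (Set.range fun u : Fin n =>
        (H %ₘ (∏ ℓ, (X - C (a ℓ))).map (algebraMap F A)).coeff u) := by
  have hmonic : (∏ ℓ, (X - C (a ℓ))).Monic := monic_prod_of_monic _ _ fun ℓ _ => monic_X_sub_C _
  set G : A[X] := (∏ ℓ, (X - C (a ℓ))).map (algebraMap F A)
  have hG : G.Monic := hmonic.map _
  have hdeg : (H %ₘ G).degree < n := by
    nontriviality A
    calc (H %ₘ G).degree < G.degree := degree_modByMonic_lt H hG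
      _ = n := by
        rw [degree_eq_natDegree hG.ne_zero, hmonic.natDegree_map,
          natDegree_finsetProd_X_sub_C_eq_card, Finset.card_univ, Fintype.card_fin]
  have hroot : ∀ ℓ, G.eval (algebraMap F A (a ℓ)) = 0 := fun ℓ => by
    rw [eval_map_algebraMap, aeval_algebraMap_apply, coe_aeval_eq_eval, eval_prod,
      Finset.prod_eq_zero (Finset.mem_univ ℓ) (by rw [eval_sub, eval_X, eval_C, sub_self]),
      map_zero]
  rw [← span_eval_eq_span_coeff ha hdeg]
  simp_rw [← eval₂_id, eval₂_modByMonic_eq_self_of_root (hroot _)]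

end

theorem stmt0_general (F : Type*) [Field F] (n t k : ℕ)
    (a : Fin n → F) (ha : Function.Injective a)
    (G : Polynomial F) (hG : G = ∏ ℓ : Fin n, (X - C (a ℓ)))
    (R : Polynomial F) :
    Submodule.span F
      {x : MvPolynomial (Fin t ⊕ Fin k) F | ∃ ℓ : Fin n,
        x = (Lam F t k * Pp F t k - Lam F t k * liftP F t k R).eval
              (MvPolynomial.C (a ℓ))} =
    Submodule.span F
      {x : MvPolynomial (Fin t ⊕ Fin k) F | ∃ u : Fin n,
        x = ((Lam F t k * Pp F t k - Lam F t k * liftP F t k R) %ₘ liftP F t k G).coeff u} := by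
  have hrange (f : Fin n → MvPolynomial (Fin t ⊕ Fin k) F) :
      {x | ∃ i, x = f i} = Set.range f := by
    ext
    simp [eq_comm]
  simp only [hrange, liftP, hG, ← MvPolynomial.algebraMap_eq]
  exact span_eval_eq_span_coeff_modByMonic ha _

/-- the span of the `n` evaluations of `Λ·P − Λ·R` at the points `a ℓ`
equals the span of the `n` coefficients of `(Λ·P − Λ·R) mod G`. -/
theorem stmt0 (F : Type*) [Field F] (n t k : ℕ) (hn : 0 < n) (ht : 1 ≤ t) (hk : 1 ≤ k)
    (a b : Fin n → F) (ha : Function.Injective a)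
    (G : Polynomial F) (hG : G = ∏ ℓ : Fin n, (X - C (a ℓ)))
    (R : Polynomial F) (hRdeg : R.degree < n) (hR : ∀ ℓ, R.eval (a ℓ) = b ℓ) :
    Submodule.span F
      {x : MvPolynomial (Fin t ⊕ Fin k) F | ∃ ℓ : Fin n,
        x = (Lam F t k * Pp F t k - Lam F t k * liftP F t k R).eval
              (MvPolynomial.C (a ℓ))} =
    Submodule.span F
      {x : MvPolynomial (Fin t ⊕ Fin k) F | ∃ u : Fin n,
        x = ((Lam F t k * Pp F t k - Lam F t k * liftP F t k R) %ₘ liftP F t k G).coeff u} :=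
  stmt0_general F n t k a ha G hG R
end

section
/- For every integer j ≥ 1 with t + (k−1)j ≤ n−1, the remainder of Λ·R^j upon division by G equals Λ·P^j; that is, (Λ·R^j mod G) = Λ·P^j. In particular G divides Λ·(P^j − R^j), and for every u with t + (k−1)j + 1 ≤ u ≤ n−1 the coefficient of X^u in (Λ·R^j mod G) vanishes. -/
open Polynomial

/-- for every `j ≥ 1` with `t + (k−1)j ≤ n−1`, the remainder of `Λ·R^j`
mod `G` equals `Λ·P^j`; in particular `G ∣ Λ·(P^j − R^j)` and the coefficients of
`(Λ·R^j mod G)` of degree `u` with `t + (k−1)j + 1 ≤ u ≤ n − 1` vanish. -/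
theorem stmt1 (F : Type*) [Field F] (n t k : ℕ) (hn : 0 < n) (ht : 1 ≤ t) (hk : 1 ≤ k)
    (htk : t + k - 1 ≤ n - 1)
    (a b : Fin n → F) (ha : Function.Injective a)
    (G : Polynomial F) (hG : G = ∏ ℓ : Fin n, (X - C (a ℓ)))
    (R : Polynomial F) (hRdeg : R.degree < n) (hR : ∀ ℓ, R.eval (a ℓ) = b ℓ)
    (Λ P : Polynomial F) (hmon : Λ.Monic) (hΛdeg : Λ.natDegree = t)
    (hPdeg : P.natDegree ≤ k - 1) (hdvd : G ∣ Λ * (P - R)) :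
    ∀ j : ℕ, 1 ≤ j → t + (k - 1) * j ≤ n - 1 →
      (Λ * R ^ j) %ₘ G = Λ * P ^ j ∧
      G ∣ Λ * (P ^ j - R ^ j) ∧
      ∀ u : ℕ, t + (k - 1) * j + 1 ≤ u → u ≤ n - 1 →
        ((Λ * R ^ j) %ₘ G).coeff u = 0 := by
  intro j hj hjn
  have hGmon : G.Monic := by
    rw [hG]; exact monic_prod_of_monic _ _ fun i _ => monic_X_sub_C (a i)
  have hGdeg : G.natDegree = n := by
    rw [hG, natDegree_prod_of_monic _ _ fun i _ => monic_X_sub_C (a i)]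
    simp
  -- divisibility
  have hdvdj : G ∣ Λ * (P ^ j - R ^ j) := by
    refine hdvd.trans ?_
    obtain ⟨c, hc⟩ := sub_dvd_pow_sub_pow P R j
    exact ⟨c, by rw [mul_assoc, ← hc]⟩
  -- degree bound on Λ * P ^ j
  have hdegP : (Λ * P ^ j).natDegree ≤ t + (k - 1) * j := by
    calc (Λ * P ^ j).natDegree ≤ Λ.natDegree + (P ^ j).natDegree :=
          natDegree_mul_le
      _ ≤ t + (k - 1) * j := by
          refine add_le_add hΛdeg.le ((natDegree_pow_le).trans ?_)
          rw [mul_comm j]; exact Nat.mul_le_mul_right j hPdeg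
  have hdeglt : (Λ * P ^ j).degree < G.degree := by
    rw [degree_eq_natDegree hGmon.ne_zero, hGdeg]
    calc (Λ * P ^ j).degree ≤ ((Λ * P ^ j).natDegree : WithBot ℕ) := degree_le_natDegree
      _ ≤ ((n - 1 : ℕ) : WithBot ℕ) := by exact_mod_cast hdegP.trans hjn
      _ < (n : WithBot ℕ) := by exact_mod_cast Nat.sub_lt hn one_pos
  have hmod : (Λ * R ^ j) %ₘ G = Λ * P ^ j := by
    have h1 : (Λ * R ^ j - Λ * P ^ j) %ₘ G = 0 := by
      rw [modByMonic_eq_zero_iff_dvd hGmon]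
      have : Λ * R ^ j - Λ * P ^ j = -(Λ * (P ^ j - R ^ j)) := by ring
      rw [this]
      exact hdvdj.neg_right
    have h2 := sub_modByMonic (Λ * R ^ j) (Λ * P ^ j) G
    rw [h1, (modByMonic_eq_self_iff hGmon).2 hdeglt] at h2
    exact sub_eq_zero.mp h2.symm
  refine ⟨hmod, hdvdj, fun u hu _ => ?_⟩
  rw [hmod]
  exact coeff_eq_zero_of_natDegree_lt (lt_of_le_of_lt hdegP hu)
end

section
/- (Proposition 2 of the paper.) Let pow₁ := ⌊(n−t−1)/(k−1)⌋ = max{u : t + (k−1)u ≤ n−1}. For every j with 1 ≤ j ≤ pow₁ and every u with t + (k−1)j + 1 ≤ u ≤ n−1, the coefficient of X^u in the polynomial (Λ·R^j mod G) ∈ A[X] — which is a polynomial of total degree ≤ 1 in the variables λ₀,…,λ_{t−1} — belongs to the subspace I₂. (These are exactly the affine equations produced by Algorithm 1 run with D = 2, i.e. the power-decoding equations.) -/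
/-!
Write `Sⱼ = Λ·Rʲ mod G` and `E = Λ·P − (Λ·R mod G)`. Since `Sⱼ ≡ Λ·Rʲ (mod G)`, we have
`Sⱼ₊₁ ≡ Sⱼ·P − Rʲ·E (mod G)`, and reduction modulo `G`, a polynomial over `F`, only forms
`F`-linear combinations of coefficients. The coefficients of `Rʲ·E mod G` therefore lie in `I₂`.
Split `Sⱼ` at degree `m = t + (k−1)j`: the low part times `P` has degree `≤ m + k − 1 < n`, so it
is its own remainder and contributes nothing above `m + k − 1`; by induction the high part has
affine coefficients in `I₂`, and multiplying these by the variables `pᵢ` stays within `I₂`.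
-/

open Polynomial

noncomputable def ID (F : Type*) [Field F] (t k : ℕ) (R G : Polynomial F) (D : ℕ) :
    Submodule F (MvPolynomial (Fin t ⊕ Fin k) F) :=
  sInf {W : Submodule F (MvPolynomial (Fin t ⊕ Fin k) F) |
    (Set.range (Lam F t k * Pp F t k - (Lam F t k * liftP F t k R) %ₘ liftP F t k G).coeff) ⊆ W ∧
    ∀ f ∈ W, ∀ d : (Fin t ⊕ Fin k) →₀ ℕ,
      ((MvPolynomial.monomial d (1 : F)) * f).totalDegree ≤ D →
      (MvPolynomial.monomial d (1 : F)) * f ∈ W}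

namespace Polynomial

variable {R A : Type*} [CommRing R] [CommRing A] [Algebra R A] (W : Submodule R A)

theorem coeff_mul_map_algebraMap_mem {p : A[X]} (hp : ∀ i, p.coeff i ∈ W) (q : R[X]) (u : ℕ) :
    (p * q.map (algebraMap R A)).coeff u ∈ W := by
  rw [coeff_mul]
  refine sum_mem fun x _ => ?_
  rw [coeff_map, mul_comm, ← Algebra.smul_def]
  exact W.smul_mem _ (hp _)

theorem coeff_modByMonic_map_algebraMap_mem {g : R[X]} (hg : g.Monic) {f : A[X]}
    (hf : ∀ i, f.coeff i ∈ W) (u : ℕ) : (f %ₘ g.map (algebraMap R A)).coeff u ∈ W := by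
  rw [f.as_sum_support_C_mul_X_pow, ← modByMonicHom_apply, map_sum, finsetSum_coeff]
  refine sum_mem fun i _ => ?_
  rw [modByMonicHom_apply, ← smul_eq_C_mul, smul_modByMonic, ← Polynomial.map_X (algebraMap R A),
    ← Polynomial.map_pow, ← map_modByMonic _ hg, coeff_smul, coeff_map, smul_eq_mul, mul_comm,
    ← Algebra.smul_def]
  exact W.smul_mem _ (hf i)

end Polynomial

open MvPolynomial (restrictTotalDegree mem_restrictTotalDegree)

section LamPp

variable {F : Type*} [CommRing F] {t k : ℕ}

theorem liftP_eq_map_algebraMap (f : F[X]) :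
    liftP F t k f = f.map (algebraMap F (MvPolynomial (Fin t ⊕ Fin k) F)) := by
  rw [liftP, MvPolynomial.algebraMap_eq]

theorem liftP_pow (f : F[X]) (j : ℕ) : liftP F t k f ^ j = liftP F t k (f ^ j) :=
  (Polynomial.map_pow _ _).symm

theorem coeff_Lam_mem_restrictTotalDegree [Nontrivial F] (a : ℕ) :
    (Lam F t k).coeff a ∈ restrictTotalDegree (Fin t ⊕ Fin k) F 1 := by
  rw [Lam, coeff_add, finsetSum_coeff]
  refine add_mem ?_ (sum_mem fun j _ => ?_) <;>
    simp [coeff_X_pow, apply_ite, mem_restrictTotalDegree, MvPolynomial.totalDegree_X]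

theorem natDegree_Lam_le : (Lam F t k).natDegree ≤ t :=
  natDegree_add_le_of_degree_le (natDegree_X_pow_le t) <|
    natDegree_sum_le_of_forall_le _ _ fun j _ => (natDegree_C_mul_X_pow_le _ _).trans j.2.le

theorem natDegree_Pp_le : (Pp F t k).natDegree ≤ k - 1 :=
  natDegree_sum_le_of_forall_le _ _ fun i _ =>
    (natDegree_C_mul_X_pow_le _ _).trans (Nat.le_sub_one_of_lt i.2)

end LamPp

noncomputable def decodingPoly (F : Type*) [CommRing F] (t k : ℕ) (R G : F[X]) :
    Polynomial (MvPolynomial (Fin t ⊕ Fin k) F) :=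
  Lam F t k * Pp F t k - (Lam F t k * liftP F t k R) %ₘ liftP F t k G

section Ideal

variable {F : Type*} [Field F] {t k : ℕ} {R G : F[X]} {D : ℕ}

theorem coeff_decodingPoly_mem_ID (u : ℕ) : (decodingPoly F t k R G).coeff u ∈ ID F t k R G D :=
  Submodule.mem_sInf.2 fun _ hW => hW.1 ⟨u, rfl⟩

theorem X_mul_mem_ID {f : MvPolynomial (Fin t ⊕ Fin k) F} (hf : f ∈ ID F t k R G D)
    (hdeg : f.totalDegree + 1 ≤ D) (v : Fin t ⊕ Fin k) : MvPolynomial.X v * f ∈ ID F t k R G D := by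
  have hXf : (MvPolynomial.X v * f).totalDegree ≤ D :=
    (MvPolynomial.totalDegree_mul _ _).trans (by rw [MvPolynomial.totalDegree_X]; omega)
  exact Submodule.mem_sInf.2 fun W hW =>
    hW.2 f (Submodule.mem_sInf.1 hf W hW) (Finsupp.single v 1) hXf

theorem coeff_mul_Pp_mem_ID {H : Polynomial (MvPolynomial (Fin t ⊕ Fin k) F)}
    (hH : ∀ a, H.coeff a ∈ ID F t k R G D ∧ (H.coeff a).totalDegree + 1 ≤ D) (w : ℕ) :
    (H * Pp F t k).coeff w ∈ ID F t k R G D := by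
  rw [Pp, Finset.mul_sum, finsetSum_coeff]
  refine sum_mem fun i _ => ?_
  rw [mul_left_comm, coeff_C_mul, coeff_mul_X_pow']
  split_ifs
  · exact X_mul_mem_ID (hH _).1 (hH _).2 _
  · rw [mul_zero]
    exact zero_mem _

theorem totalDegree_coeff_Lam_mul_liftP_modByMonic_le {g : F[X]} (hg : g.Monic) (f : F[X])
    (u : ℕ) : (((Lam F t k * liftP F t k f) %ₘ liftP F t k g).coeff u).totalDegree ≤ 1 := by
  rw [← mem_restrictTotalDegree, liftP_eq_map_algebraMap, liftP_eq_map_algebraMap]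
  exact coeff_modByMonic_map_algebraMap_mem _ hg
    (coeff_mul_map_algebraMap_mem _ coeff_Lam_mem_restrictTotalDegree f) u

theorem modByMonic_Lam_mul_liftP_pow_succ (hG : G.Monic) {j : ℕ}
    {S : Polynomial (MvPolynomial (Fin t ⊕ Fin k) F)}
    (hS : liftP F t k G ∣ S - Lam F t k * liftP F t k R ^ j) :
    (Lam F t k * liftP F t k R ^ (j + 1)) %ₘ liftP F t k G =
      (S * Pp F t k) %ₘ liftP F t k G -
        (liftP F t k R ^ j * decodingPoly F t k R G) %ₘ liftP F t k G := by
  rw [← sub_modByMonic]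
  refine modByMonic_eq_of_dvd_sub (hG.map _) ?_
  have hE : liftP F t k G ∣
      Lam F t k * liftP F t k R - (Lam F t k * liftP F t k R) %ₘ liftP F t k G := by
    rw [modByMonic_eq_sub_mul_div, sub_sub_cancel]; exact dvd_mul_right _ _
  convert (dvd_mul_of_dvd_left hS (Pp F t k)).neg_right.add
    (dvd_mul_of_dvd_right hE (liftP F t k R ^ j)) using 1
  rw [decodingPoly]
  ring

theorem coeff_mul_Pp_modByMonic_mem_ID {n : ℕ} (hG : G.Monic) (hGn : G.natDegree = n) {m : ℕ}
    (hm : m + (k - 1) < n) {S : Polynomial (MvPolynomial (Fin t ⊕ Fin k) F)}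
    (hS_aff : ∀ a, (S.coeff a).totalDegree ≤ 1) (hS_mem : ∀ a, m < a → S.coeff a ∈ ID F t k R G 2)
    {u : ℕ} (hu : m + (k - 1) < u) :
    ((S * Pp F t k) %ₘ liftP F t k G).coeff u ∈ ID F t k R G 2 := by
  set L := PowerSeries.trunc (m + 1) S.toPowerSeries with hL
  have hLP : (L * Pp F t k).natDegree ≤ m + (k - 1) :=
    natDegree_mul_le.trans (add_le_add (Nat.lt_succ_iff.1 (PowerSeries.natDegree_trunc_lt _ _))
      natDegree_Pp_le)
  have hLP_mod : (L * Pp F t k) %ₘ liftP F t k G = L * Pp F t k := by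
    refine (modByMonic_eq_self_iff (hG.map _)).2 (degree_lt_degree ?_)
    rw [hG.natDegree_map, hGn]
    exact hLP.trans_lt hm
  have hH : ∀ a, (S - L).coeff a ∈ ID F t k R G 2 ∧ ((S - L).coeff a).totalDegree + 1 ≤ 2 := by
    intro a
    rw [coeff_sub, hL, PowerSeries.coeff_trunc, Polynomial.coeff_coe]
    split_ifs with ha
    · simp
    · simpa using ⟨hS_mem a (by omega), hS_aff a⟩
  rw [← sub_add_cancel S L, add_mul, add_modByMonic, coeff_add, hLP_mod,
    coeff_eq_zero_of_natDegree_lt (hLP.trans_lt hu), add_zero, liftP_eq_map_algebraMap]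
  exact coeff_modByMonic_map_algebraMap_mem _ hG (coeff_mul_Pp_mem_ID hH) u

theorem coeff_Lam_mul_liftP_pow_succ_modByMonic_mem_ID {n : ℕ} (hG : G.Monic)
    (hGn : G.natDegree = n) {j m : ℕ} (hm : m + (k - 1) < n)
    {S : Polynomial (MvPolynomial (Fin t ⊕ Fin k) F)}
    (hS : liftP F t k G ∣ S - Lam F t k * liftP F t k R ^ j)
    (hS_aff : ∀ a, (S.coeff a).totalDegree ≤ 1) (hS_mem : ∀ a, m < a → S.coeff a ∈ ID F t k R G 2)
    {u : ℕ} (hu : m + (k - 1) < u) :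
    ((Lam F t k * liftP F t k R ^ (j + 1)) %ₘ liftP F t k G).coeff u ∈ ID F t k R G 2 := by
  rw [modByMonic_Lam_mul_liftP_pow_succ hG hS, coeff_sub]
  refine sub_mem (coeff_mul_Pp_modByMonic_mem_ID hG hGn hm hS_aff hS_mem hu) ?_
  rw [mul_comm, liftP_pow, liftP_eq_map_algebraMap, liftP_eq_map_algebraMap]
  exact coeff_modByMonic_map_algebraMap_mem _ hG
    (coeff_mul_map_algebraMap_mem _ coeff_decodingPoly_mem_ID _) u

theorem coeff_Lam_mul_liftP_pow_modByMonic_mem_ID {n : ℕ} (hG : G.Monic) (hGn : G.natDegree = n)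
    {j : ℕ} (hj : 1 ≤ j) (hjn : t + (k - 1) * j < n) {u : ℕ} (hu : t + (k - 1) * j < u) :
    ((Lam F t k * liftP F t k R ^ j) %ₘ liftP F t k G).coeff u ∈ ID F t k R G 2 := by
  induction j, hj using Nat.le_induction generalizing u with
  | base =>
    -- the step from `S = Λ ≡ Λ·R⁰`, whose coefficients above degree `t` vanish
    rw [mul_one] at hjn hu
    refine coeff_Lam_mul_liftP_pow_succ_modByMonic_mem_ID (j := 0) (S := Lam F t k) hG hGn hjn
      (by simp) (fun a => (mem_restrictTotalDegree _ _ _).1 (coeff_Lam_mem_restrictTotalDegree a))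
      (fun a ha => ?_) hu
    rw [coeff_eq_zero_of_natDegree_lt (natDegree_Lam_le.trans_lt ha)]
    exact zero_mem _
  | succ j hj ih =>
    rw [mul_add_one, ← add_assoc] at hjn hu
    refine coeff_Lam_mul_liftP_pow_succ_modByMonic_mem_ID hG hGn hjn ?_ (fun a => ?_)
      (fun a ha => ih (by omega) ha) hu
    · rw [modByMonic_eq_sub_mul_div, sub_sub_cancel_left]
      exact (dvd_mul_right _ _).neg_right
    · rw [liftP_pow]
      exact totalDegree_coeff_Lam_mul_liftP_modByMonic_le hG _ a

end Ideal

theorem stmt2_general (F : Type*) [Field F] (n t k : ℕ) (a : Fin n → F)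
    (G : Polynomial F) (hG : G = ∏ ℓ : Fin n, (X - C (a ℓ)))
    (R : Polynomial F) :
    ∀ j : ℕ, 1 ≤ j → j ≤ (n - t - 1) / (k - 1) →
      ∀ u : ℕ, t + (k - 1) * j + 1 ≤ u → u ≤ n - 1 →
        (((Lam F t k * liftP F t k R ^ j) %ₘ liftP F t k G).coeff u).totalDegree ≤ 1 ∧
        ((Lam F t k * liftP F t k R ^ j) %ₘ liftP F t k G).coeff u ∈ ID F t k R G 2 := by
  intro j hj hjq u hu _
  have hGm : G.Monic := hG ▸ monic_prod_of_monic _ _ fun ℓ _ => monic_X_sub_C (a ℓ)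
  have hGn : G.natDegree = n := by simp [hG]
  have hjn : t + (k - 1) * j < n := by
    have hmul : j * (k - 1) ≤ n - t - 1 := Nat.mul_le_of_le_div _ _ _ hjq
    have hq : (n - t - 1) / (k - 1) ≤ n - t - 1 := Nat.div_le_self _ _
    rw [mul_comm] at hmul
    omega
  refine ⟨?_, coeff_Lam_mul_liftP_pow_modByMonic_mem_ID hGm hGn hj hjn hu⟩
  rw [liftP_pow]
  exact totalDegree_coeff_Lam_mul_liftP_modByMonic_le hGm _ u

/-- Proposition 2: with `pow₁ = ⌊(n−t−1)/(k−1)⌋`, for `1 ≤ j ≤ pow₁` and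
`t + (k−1)j + 1 ≤ u ≤ n−1`, the coefficient of `X^u` in `(Λ·R^j mod G)` is an affine
polynomial (total degree ≤ 1) lying in `I₂`. -/
theorem stmt2 (F : Type*) [Field F] (n t k : ℕ) (hn : 0 < n) (ht : 1 ≤ t) (hk : 2 ≤ k)
    (htk : t + k - 1 ≤ n - 1)
    (a b : Fin n → F) (ha : Function.Injective a)
    (G : Polynomial F) (hG : G = ∏ ℓ : Fin n, (X - C (a ℓ)))
    (R : Polynomial F) (hRdeg : R.degree < n) (hR : ∀ ℓ, R.eval (a ℓ) = b ℓ) :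
    ∀ j : ℕ, 1 ≤ j → j ≤ (n - t - 1) / (k - 1) →
      ∀ u : ℕ, t + (k - 1) * j + 1 ≤ u → u ≤ n - 1 →
        (((Lam F t k * liftP F t k R ^ j) %ₘ liftP F t k G).coeff u).totalDegree ≤ 1 ∧
        ((Lam F t k * liftP F t k R ^ j) %ₘ liftP F t k G).coeff u ∈ ID F t k R G 2 :=
  stmt2_general F n t k a G hG R
end

section
/- Let Ω := −(Λ·R div G) ∈ A[X] be the negated quotient in the division of Λ·R by the monic polynomial G. Then deg Ω ≤ t − 1, and every coefficient of Ω is a polynomial of total degree at most 1 in A which lies in the subring of A generated by F and the variables λ₀,…,λ_{t−1} (i.e. the coefficients of Ω are affine functions of the λ_j's, not involving the p_i's). -/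
open Polynomial

/-- `Ω`, the negated quotient in the division of `Λ·R` by the monic polynomial `G`. -/
noncomputable def Om (F : Type*) [Field F] (t k : ℕ) (R G : Polynomial F) :
    Polynomial (MvPolynomial (Fin t ⊕ Fin k) F) :=
  -((Lam F t k * liftP F t k R) /ₘ liftP F t k G)

/-!
Expanding `Λ`, `Λ·R = R·X^t + ∑ⱼ λⱼ·(R·X^j)`. Division by the monic `G` is linear over the
coefficient ring and commutes with the base change `F → A`, so
`Ω = -(R·X^t /ₘ G + ∑ⱼ λⱼ·(R·X^j /ₘ G))` with all quotients in `F[X]`: every coefficient of `Ω`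
is an `F`-linear combination of `1` and the `λⱼ`. Since `deg R < deg G`, the quotient
`R·X^j /ₘ G` has degree `< j ≤ t`.
-/

namespace Polynomial

variable {R : Type*} [CommRing R] {q : R[X]}

theorem add_divByMonic (p₁ p₂ : R[X]) : (p₁ + p₂) /ₘ q = p₁ /ₘ q + p₂ /ₘ q := by
  by_cases hq : q.Monic
  · nontriviality R
    exact (div_modByMonic_unique (p₁ /ₘ q + p₂ /ₘ q) (p₁ %ₘ q + p₂ %ₘ q) hq
      ⟨by linear_combination modByMonic_add_div p₁ q + modByMonic_add_div p₂ q,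
        (degree_add_le _ _).trans_lt
          (max_lt (degree_modByMonic_lt _ hq) (degree_modByMonic_lt _ hq))⟩).1
  · simp_rw [divByMonic_eq_of_not_monic _ hq, add_zero]

theorem smul_divByMonic (c : R) (p : R[X]) : c • p /ₘ q = c • (p /ₘ q) := by
  by_cases hq : q.Monic
  · nontriviality R
    exact (div_modByMonic_unique (c • (p /ₘ q)) (c • (p %ₘ q)) hq
      ⟨by rw [mul_smul_comm, ← smul_add, modByMonic_add_div],
        (degree_smul_le _ _).trans_lt (degree_modByMonic_lt _ hq)⟩).1
  · simp_rw [divByMonic_eq_of_not_monic _ hq, smul_zero]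

@[simps]
noncomputable def divByMonicHom (q : R[X]) : R[X] →ₗ[R] R[X] where
  toFun p := p /ₘ q
  map_add' := add_divByMonic
  map_smul' := smul_divByMonic

theorem natDegree_mul_X_pow_divByMonic_le (hq : q.Monic) {p : R[X]}
    (hp : p.degree < q.natDegree) (j : ℕ) : ((p * X ^ j) /ₘ q).natDegree ≤ j - 1 := by
  rcases eq_or_ne p 0 with rfl | hp0
  · simp
  have hpq : p.natDegree < q.natDegree := (natDegree_lt_iff_degree_lt hp0).2 hp
  have hpj : (p * X ^ j).natDegree ≤ p.natDegree + j :=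
    natDegree_mul_le.trans (by gcongr; exact natDegree_X_pow_le j)
  rw [natDegree_divByMonic _ hq]
  omega

end Polynomial

namespace MvPolynomial

variable {σ R : Type*} [CommSemiring R]

theorem span_insert_one_X_le (s : Set σ) :
    Submodule.span R (insert 1 (X '' s)) ≤
      restrictTotalDegree σ R 1 ⊓ Subalgebra.toSubmodule (supported R s) := by
  nontriviality R
  rw [Submodule.span_le, Set.insert_subset_iff, Set.image_subset_iff]
  refine ⟨⟨?_, ?_⟩, fun v hv => ⟨?_, ?_⟩⟩
  · simp [mem_restrictTotalDegree]
  · exact Subalgebra.one_mem _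
  · simp [mem_restrictTotalDegree, totalDegree_X]
  · exact X_mem_supported.2 hv

end MvPolynomial

section Omega

variable {F : Type*} {t k : ℕ}

theorem lam_mul_liftP [CommRing F] (R : F[X]) :
    Lam F t k * liftP F t k R = liftP F t k (R * X ^ t) +
      ∑ j : Fin t, C (MvPolynomial.X (Sum.inl j)) * liftP F t k (R * X ^ (j : ℕ)) := by
  simp only [Lam, liftP, Polynomial.map_mul, Polynomial.map_pow, map_X, add_mul, Finset.sum_mul,
    mul_assoc, X_pow_mul]

theorem om_eq_neg_liftP_add_sum [Field F] {R G : F[X]} (hG : G.Monic) :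
    Om F t k R G = -(liftP F t k ((R * X ^ t) /ₘ G) +
      ∑ j : Fin t, C (MvPolynomial.X (Sum.inl j)) * liftP F t k ((R * X ^ (j : ℕ)) /ₘ G)) := by
  rw [Om, lam_mul_liftP, ← divByMonicHom_apply, map_add, map_sum]
  simp_rw [← smul_eq_C_mul, map_smul, divByMonicHom_apply, liftP, map_divByMonic _ hG]

theorem degree_liftP_add_sum_le [CommRing F] {d : WithBot ℕ} {q₀ : F[X]} {q : ℕ → F[X]}
    (h₀ : q₀.degree ≤ d) (h : ∀ j : Fin t, (q j).degree ≤ d) :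
    (liftP F t k q₀ +
      ∑ j : Fin t, C (MvPolynomial.X (Sum.inl j)) * liftP F t k (q j)).degree ≤ d := by
  have hlift (p : F[X]) : (liftP F t k p).degree = p.degree :=
    degree_map_eq_of_injective (MvPolynomial.C_injective _ _) p
  refine (degree_add_le _ _).trans (max_le (hlift q₀ ▸ h₀) ?_)
  refine (degree_sum_le _ _).trans (Finset.sup_le fun j _ => ?_)
  rw [← smul_eq_C_mul]
  exact (degree_smul_le _ _).trans (hlift (q j) ▸ h j)

theorem coeff_liftP_add_sum_mem_span [CommRing F] (q₀ : F[X]) (q : ℕ → F[X]) (i : ℕ) :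
    (liftP F t k q₀ + ∑ j : Fin t, C (MvPolynomial.X (Sum.inl j)) * liftP F t k (q j)).coeff i ∈
      Submodule.span F (insert 1 (MvPolynomial.X '' {v : Fin t ⊕ Fin k | ∃ j, v = Sum.inl j})) := by
  simp only [coeff_add, finsetSum_coeff, coeff_C_mul, liftP, coeff_map]
  refine add_mem ?_ (Submodule.sum_mem _ fun j _ => ?_)
  · rw [← mul_one (MvPolynomial.C _), ← MvPolynomial.smul_eq_C_mul]
    exact Submodule.smul_mem _ _ (Submodule.subset_span (Set.mem_insert _ _))
  · rw [mul_comm, ← MvPolynomial.smul_eq_C_mul]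
    exact Submodule.smul_mem _ _
      (Submodule.subset_span (Set.mem_insert_of_mem _ ⟨_, ⟨j, rfl⟩, rfl⟩))

end Omega

theorem stmt4_general (F : Type*) [Field F] (n t k : ℕ)
    (a : Fin n → F)
    (G : Polynomial F) (hG : G = ∏ ℓ : Fin n, (X - C (a ℓ)))
    (R : Polynomial F) (hRdeg : R.degree < n) :
    (Om F t k R G).degree ≤ ((t - 1 : ℕ) : WithBot ℕ) ∧
    ∀ i : ℕ, ((Om F t k R G).coeff i).totalDegree ≤ 1 ∧
      (Om F t k R G).coeff i ∈
        MvPolynomial.supported F {v : Fin t ⊕ Fin k | ∃ j : Fin t, v = Sum.inl j} := by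
  have hGm : G.Monic := by
    rw [hG]
    exact monic_prod_of_monic _ _ fun ℓ _ => monic_X_sub_C (a ℓ)
  have hGn : G.natDegree = n := by
    rw [hG, natDegree_finsetProd_X_sub_C_eq_card, Finset.card_univ, Fintype.card_fin]
  have hquot (j : ℕ) (hj : j ≤ t) : ((R * X ^ j) /ₘ G).degree ≤ ((t - 1 : ℕ) : WithBot ℕ) :=
    degree_le_of_natDegree_le
      ((natDegree_mul_X_pow_divByMonic_le hGm (by rwa [hGn]) j).trans (by omega))
  rw [om_eq_neg_liftP_add_sum hGm, degree_neg]
  refine ⟨degree_liftP_add_sum_le (q := fun j => (R * X ^ j) /ₘ G) (hquot t le_rfl)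
    fun j => hquot j j.2.le, fun i => ?_⟩
  have hmem := MvPolynomial.span_insert_one_X_le _ <| neg_mem <|
    coeff_liftP_add_sum_mem_span (t := t) (k := k) ((R * X ^ t) /ₘ G) (fun j => (R * X ^ j) /ₘ G) i
  rw [coeff_neg]
  exact ⟨(MvPolynomial.mem_restrictTotalDegree _ _ _).1 hmem.1, hmem.2⟩

/-- `Ω := −(Λ·R div G)` has degree ≤ t−1, and every coefficient of `Ω`
is a polynomial of total degree ≤ 1 involving only the variables `λ₀,…,λ_{t−1}`. -/
theorem stmt4 (F : Type*) [Field F] (n t k : ℕ) (hn : 0 < n) (ht : 1 ≤ t) (hk : 1 ≤ k)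
    (a b : Fin n → F) (ha : Function.Injective a)
    (G : Polynomial F) (hG : G = ∏ ℓ : Fin n, (X - C (a ℓ)))
    (R : Polynomial F) (hRdeg : R.degree < n) (hR : ∀ ℓ, R.eval (a ℓ) = b ℓ) :
    (Om F t k R G).degree ≤ ((t - 1 : ℕ) : WithBot ℕ) ∧
    ∀ i : ℕ, ((Om F t k R G).coeff i).totalDegree ≤ 1 ∧
      (Om F t k R G).coeff i ∈
        MvPolynomial.supported F {v : Fin t ⊕ Fin k | ∃ j : Fin t, v = Sum.inl j} :=
  stmt4_general F n t k a G hG R hRdeg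
end

section
/- (Identity (8), without modular reduction.) With Ω := −(Λ·R div G), for all integers s ≥ 1 and u with 1 ≤ u ≤ s−1 one has the polynomial identity Λ^s · P^u = Σ_{i=0}^{u} binom(u,i) · Λ^{s−i} · Ω^i · R^{u−i} · G^i. -/
open Polynomial

/-- identity (8), without modular reduction: with `Ω := −(Λ·R div G)`,
for `s ≥ 1` and `1 ≤ u ≤ s−1`,
`Λ^s · P^u = Σ_{i=0}^{u} binom(u,i) · Λ^{s−i} · Ω^i · R^{u−i} · G^i`. -/
theorem stmt5 (F : Type*) [Field F] (n t k : ℕ) (hn : 0 < n) (ht : 1 ≤ t) (hk : 1 ≤ k)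
    (htk : t + k - 1 ≤ n - 1)
    (a b : Fin n → F) (ha : Function.Injective a)
    (G : Polynomial F) (hG : G = ∏ ℓ : Fin n, (X - C (a ℓ)))
    (R : Polynomial F) (hRdeg : R.degree < n) (hR : ∀ ℓ, R.eval (a ℓ) = b ℓ)
    (Λ P : Polynomial F) (hmon : Λ.Monic) (hΛdeg : Λ.natDegree = t)
    (hPdeg : P.natDegree ≤ k - 1) (hdvd : G ∣ Λ * (P - R)) :
    ∀ s u : ℕ, 1 ≤ s → 1 ≤ u → u ≤ s - 1 →
      Λ ^ s * P ^ u =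
        ∑ i ∈ Finset.range (u + 1),
          u.choose i • (Λ ^ (s - i) * (-((Λ * R) /ₘ G)) ^ i * R ^ (u - i) * G ^ i) := by
  intro s u hs hu hus
  have hus' : u ≤ s := le_trans hus (Nat.sub_le s 1)
  have hGmon : G.Monic := hG ▸ monic_prod_of_monic _ _ (fun i _ => monic_X_sub_C _)
  have hGdeg : G.natDegree = n := by
    rw [hG, natDegree_prod_of_monic _ _ (fun i _ => monic_X_sub_C _)]
    simp
  obtain ⟨c, hc⟩ := hdvd
  have hdegΛP : (Λ * P).degree < G.degree := by
    apply degree_lt_degree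
    rw [hGdeg]
    calc (Λ * P).natDegree ≤ Λ.natDegree + P.natDegree := natDegree_mul_le
      _ < n := by omega
  have hdiv : (Λ * R) /ₘ G = -c := by
    refine (div_modByMonic_unique (-c) (Λ * P) hGmon ⟨?_, hdegΛP⟩).1
    linear_combination hc
  have hkey : Λ * P = Λ * R + (-((Λ * R) /ₘ G)) * G := by
    rw [hdiv]
    linear_combination hc
  calc Λ ^ s * P ^ u = Λ ^ (s - u) * (Λ * P) ^ u := by
        rw [mul_pow, ← mul_assoc, ← pow_add]
        congr 2
        omega
    _ = Λ ^ (s - u) * ((-((Λ * R) /ₘ G)) * G + Λ * R) ^ u := by rw [hkey, add_comm]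
    _ = _ := by
        rw [add_pow, Finset.mul_sum]
        refine Finset.sum_congr rfl fun i hi => ?_
        have hiu : i ≤ u := Nat.lt_succ_iff.mp (Finset.mem_range.mp hi)
        rw [nsmul_eq_mul, show s - i = (s - u) + (u - i) by omega, pow_add]
        ring
end

section
/- (Identity (9), with modular reduction.) With Ω := −(Λ·R div G), for all integers s ≥ 1 and u ≥ s, the polynomial G^s divides Λ^s · P^u − Σ_{i=0}^{s−1} binom(u,i) · Λ^{s−i} · Ω^i · R^{u−i} · G^i; that is, Λ^s P^u ≡ Σ_{i=0}^{s−1} binom(u,i) Λ^{s−i} Ω^i R^{u−i} G^i (mod G^s). -/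
/-!
Since `Λ * P` has degree `< n = deg G` and is congruent to `Λ * R` modulo `G`, it is the
remainder of `Λ * R` modulo `G`, i.e. `Λ * P = Λ * R + Ω * G`. The congruence then only uses
this relation `l * p = l * r + w * g` in a commutative ring: multiplying the truncated binomial
expansion `∑_{i<s} C(u,i) l^(s-i) w^i r^(u-i) g^i` by `p` and using Pascal's rule gives the
expansion for `u + 1` up to a single term divisible by `g^s`, so induction on `u` proves
`l^s p^u ≡ ∑_{i<s} C(u,i) l^(s-i) w^i r^(u-i) g^i (mod g^s)`.
-/

open Polynomial Finset

section TruncatedExpansion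

variable {A : Type*} [CommRing A]

def truncExpansion (l w r g : A) (s u : ℕ) : A :=
  ∑ i ∈ range s, u.choose i • (l ^ (s - i) * w ^ i * r ^ (u - i) * g ^ i)

theorem truncExpansion_succ (l w r g : A) (s u : ℕ) :
    truncExpansion l w r g (s + 1) u =
      l * truncExpansion l w r g s u + u.choose s • (l * w ^ s * r ^ (u - s) * g ^ s) := by
  rw [truncExpansion, sum_range_succ, truncExpansion, mul_sum, Nat.add_sub_cancel_left, pow_one]
  congr 1
  refine sum_congr rfl fun i hi => ?_
  rw [Nat.sub_add_comm (mem_range.mp hi).le, pow_succ, mul_smul_comm]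
  ring

theorem mul_truncExpansion {l p w r g : A} (hlp : l * p = l * r + w * g) (s u : ℕ) :
    p * truncExpansion l w r g (s + 1) u =
      truncExpansion l w r g (s + 1) (u + 1) +
        u.choose s • (w ^ (s + 1) * r ^ (u - s) * g ^ (s + 1)) := by
  induction s with
  | zero =>
    simp only [truncExpansion, sum_range_one, Nat.choose_zero_right, one_smul, Nat.sub_zero,
      pow_zero, pow_one, mul_one, zero_add]
    linear_combination r ^ u * hlp
  | succ s ih =>
    have hr : u.choose (s + 1) • r ^ (u - s) = u.choose (s + 1) • (r * r ^ (u - (s + 1))) := by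
      rcases lt_or_ge u (s + 1) with hu | hu
      · simp [Nat.choose_eq_zero_of_lt hu]
      · rw [← pow_succ', show u - (s + 1) + 1 = u - s by omega]
    rw [truncExpansion_succ _ _ _ _ (s + 1) u, truncExpansion_succ _ _ _ _ (s + 1) (u + 1),
      mul_add, mul_left_comm, ih, Nat.choose_succ_succ', Nat.add_sub_add_right]
    simp only [nsmul_eq_mul, Nat.cast_add] at hr ⊢
    linear_combination (u.choose (s + 1) * w ^ (s + 1) * r ^ (u - (s + 1)) * g ^ (s + 1)) * hlp
      - (l * w ^ (s + 1) * g ^ (s + 1)) * hr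

theorem dvd_pow_mul_pow_sub_truncExpansion {l p w r g : A} (hlp : l * p = l * r + w * g)
    (s u : ℕ) :
    g ^ (s + 1) ∣ l ^ (s + 1) * p ^ u - truncExpansion l w r g (s + 1) u := by
  induction u with
  | zero => simp [truncExpansion, sum_range_succ']
  | succ u ih =>
    have hstep : l ^ (s + 1) * p ^ (u + 1) - truncExpansion l w r g (s + 1) (u + 1) =
        p * (l ^ (s + 1) * p ^ u - truncExpansion l w r g (s + 1) u) +
          u.choose s • (w ^ (s + 1) * r ^ (u - s)) * g ^ (s + 1) := by
      rw [mul_sub, mul_truncExpansion hlp, smul_mul_assoc]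
      ring
    rw [hstep]
    exact dvd_add (dvd_mul_of_dvd_right ih p) (dvd_mul_left _ _)

end TruncatedExpansion

theorem Polynomial.eq_add_neg_divByMonic_mul_of_dvd_sub {R : Type*} [CommRing R] [Nontrivial R]
    {f g q : R[X]} (hq : q.Monic) (hf : f.degree < q.degree) (h : q ∣ f - g) :
    f = g + -(g /ₘ q) * q :=
  calc f = f %ₘ q := ((modByMonic_eq_self_iff hq).mpr hf).symm
    _ = g %ₘ q := modByMonic_eq_of_dvd_sub hq h
    _ = g + -(g /ₘ q) * q := by rw [modByMonic_eq_sub_mul_div]; ring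

theorem stmt6_general (F : Type*) [Field F] (n t k : ℕ) (hn : 0 < n) (hk : 1 ≤ k)
    (htk : t + k - 1 ≤ n - 1)
    (a : Fin n → F)
    (G : Polynomial F) (hG : G = ∏ ℓ : Fin n, (X - C (a ℓ)))
    (R : Polynomial F)
    (Λ P : Polynomial F) (hΛdeg : Λ.natDegree = t)
    (hPdeg : P.natDegree ≤ k - 1) (hdvd : G ∣ Λ * (P - R)) :
    ∀ s u : ℕ, 1 ≤ s → s ≤ u →
      G ^ s ∣ Λ ^ s * P ^ u -
        ∑ i ∈ Finset.range s,
          u.choose i • (Λ ^ (s - i) * (-((Λ * R) /ₘ G)) ^ i * R ^ (u - i) * G ^ i) := by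
  have hGmon : G.Monic := hG ▸ monic_prod_X_sub_C a univ
  have hGdeg : G.natDegree = n := by
    simp [hG, natDegree_prod_of_monic _ _ fun ℓ _ => monic_X_sub_C (a ℓ)]
  have hdeg : (Λ * P).degree < G.degree := by
    refine degree_lt_degree ?_
    have := natDegree_mul_le (p := Λ) (q := P)
    omega
  have hlp := eq_add_neg_divByMonic_mul_of_dvd_sub hGmon hdeg (by rwa [← mul_sub])
  intro s u hs _
  obtain ⟨s, rfl⟩ := Nat.exists_eq_add_of_le' hs
  exact dvd_pow_mul_pow_sub_truncExpansion hlp s u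

/-- identity (9), with modular reduction: with `Ω := −(Λ·R div G)`,
for `s ≥ 1` and `u ≥ s`,
`G^s ∣ Λ^s · P^u − Σ_{i=0}^{s−1} binom(u,i) · Λ^{s−i} · Ω^i · R^{u−i} · G^i`. -/
theorem stmt6 (F : Type*) [Field F] (n t k : ℕ) (hn : 0 < n) (ht : 1 ≤ t) (hk : 1 ≤ k)
    (htk : t + k - 1 ≤ n - 1)
    (a b : Fin n → F) (ha : Function.Injective a)
    (G : Polynomial F) (hG : G = ∏ ℓ : Fin n, (X - C (a ℓ)))
    (R : Polynomial F) (hRdeg : R.degree < n) (hR : ∀ ℓ, R.eval (a ℓ) = b ℓ)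
    (Λ P : Polynomial F) (hmon : Λ.Monic) (hΛdeg : Λ.natDegree = t)
    (hPdeg : P.natDegree ≤ k - 1) (hdvd : G ∣ Λ * (P - R)) :
    ∀ s u : ℕ, 1 ≤ s → s ≤ u →
      G ^ s ∣ Λ ^ s * P ^ u -
        ∑ i ∈ Finset.range s,
          u.choose i • (Λ ^ (s - i) * (-((Λ * R) /ₘ G)) ^ i * R ^ (u - i) * G ^ i) :=
  stmt6_general F n t k hn hk htk a G hG R Λ P hΛdeg hPdeg hdvd
end

section
/- (Lemma 2 of the paper.) For every integer s ≥ 1, χ(s,s) = (Λ·R + Ω·G)^s; that is, the remainder of Σ_{i=0}^{s−1} binom(s,i) Λ^{s−i} R^{s−i} Ω^i G^i upon division by G^s equals (Λ·R + Ω·G)^s. -/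
/-!
With `Ω := -(ΛR div G)` the polynomial `E := ΛR + ΩG` is the remainder of `ΛR` modulo `G`, so
`deg E^s < deg G^s`. By the binomial theorem the sum defining `χ(s,s)` is `E^s - (ΩG)^s`, and
reducing it modulo `G^s` kills `(ΩG)^s` and leaves `E^s` unchanged.
-/

open Polynomial

/-- `χ(s,u) := Λ^{s−u}·(Λ·R + Ω·G)^u` if `u < s`, and
`χ(s,u) := (Σ_{i=0}^{s−1} binom(u,i) Λ^{s−i} R^{u−i} Ω^i G^i) mod G^s` if `u ≥ s`. -/
noncomputable def chi (F : Type*) [Field F] (t k : ℕ) (R G : Polynomial F) (s u : ℕ) :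
    Polynomial (MvPolynomial (Fin t ⊕ Fin k) F) :=
  if u < s then
    Lam F t k ^ (s - u) * (Lam F t k * liftP F t k R + Om F t k R G * liftP F t k G) ^ u
  else
    (∑ i ∈ Finset.range s, u.choose i •
      (Lam F t k ^ (s - i) * liftP F t k R ^ (u - i) * Om F t k R G ^ i * liftP F t k G ^ i))
      %ₘ liftP F t k G ^ s

theorem add_pow_eq_sum_range_add_pow {A : Type*} [CommSemiring A] (x y : A) (s : ℕ) :
    (x + y) ^ s = ∑ i ∈ Finset.range s, s.choose i • (x ^ (s - i) * y ^ i) + y ^ s := by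
  rw [add_comm x y, add_pow, Finset.sum_range_succ, Nat.sub_self, pow_zero, Nat.choose_self,
    Nat.cast_one, mul_one, mul_one]
  congr 1
  refine Finset.sum_congr rfl fun i _ => ?_
  rw [nsmul_eq_mul]
  ring

namespace Polynomial

variable {A : Type*} [CommRing A]

theorem add_neg_divByMonic_mul (p G : A[X]) : p + -(p /ₘ G) * G = p %ₘ G := by
  rw [modByMonic_eq_sub_mul_div]
  ring

variable [Nontrivial A]

theorem degree_pow_lt_degree_pow_of_monic {E G : A[X]} (hG : G.Monic) (hE : E.degree < G.degree)
    {s : ℕ} (hs : s ≠ 0) : (E ^ s).degree < (G ^ s).degree := by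
  rw [degree_eq_natDegree (hG.pow s).ne_zero, hG.natDegree_pow]
  rcases eq_or_ne E 0 with rfl | hE0
  · rw [zero_pow hs, degree_zero]
    exact WithBot.bot_lt_coe _
  · rw [degree_eq_natDegree hG.ne_zero, degree_eq_natDegree hE0, Nat.cast_lt] at hE
    have hnat : (E ^ s).natDegree < s * G.natDegree :=
      natDegree_pow_le.trans_lt (Nat.mul_lt_mul_of_pos_left hE (Nat.pos_of_ne_zero hs))
    exact degree_le_natDegree.trans_lt (by exact_mod_cast hnat)

theorem sum_choose_mul_modByMonic_pow (L R G : A[X]) (hG : G.Monic) {s : ℕ} (hs : s ≠ 0) :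
    (∑ i ∈ Finset.range s, s.choose i •
        (L ^ (s - i) * R ^ (s - i) * (-((L * R) /ₘ G)) ^ i * G ^ i)) %ₘ G ^ s
      = (L * R + -((L * R) /ₘ G) * G) ^ s := by
  set Ω := -((L * R) /ₘ G)
  have hsum : ∑ i ∈ Finset.range s, s.choose i • (L ^ (s - i) * R ^ (s - i) * Ω ^ i * G ^ i)
      = (L * R + Ω * G) ^ s - Ω ^ s * G ^ s := by
    rw [add_pow_eq_sum_range_add_pow, mul_pow Ω, add_sub_cancel_right]
    simp only [mul_pow]
    refine Finset.sum_congr rfl fun i _ => ?_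
    ring
  have hdeg : ((L * R + Ω * G) ^ s).degree < (G ^ s).degree := by
    refine degree_pow_lt_degree_pow_of_monic hG ?_ hs
    rw [add_neg_divByMonic_mul]
    exact degree_modByMonic_lt _ hG
  rw [hsum, sub_modByMonic, (modByMonic_eq_self_iff (hG.pow s)).mpr hdeg,
    (modByMonic_eq_zero_iff_dvd (hG.pow s)).mpr (dvd_mul_left _ _), sub_zero]

end Polynomial

theorem stmt7_general (F : Type*) [Field F] (n t k : ℕ)
    (a : Fin n → F)
    (G : Polynomial F) (hG : G = ∏ ℓ : Fin n, (X - C (a ℓ)))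
    (R : Polynomial F) :
    ∀ s : ℕ, 1 ≤ s →
      chi F t k R G s s =
        (Lam F t k * liftP F t k R + Om F t k R G * liftP F t k G) ^ s := by
  intro s hs
  have hG_monic : G.Monic := hG ▸ monic_prod_of_monic _ _ fun _ _ => monic_X_sub_C _
  rw [chi, if_neg (lt_irrefl s)]
  exact sum_choose_mul_modByMonic_pow _ _ _ (hG_monic.map _) (Nat.one_le_iff_ne_zero.mp hs)

/-- Lemma 2: `χ(s,s) = (Λ·R + Ω·G)^s`. -/
theorem stmt7 (F : Type*) [Field F] (n t k : ℕ) (hn : 0 < n) (ht : 1 ≤ t) (hk : 1 ≤ k)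
    (a b : Fin n → F) (ha : Function.Injective a)
    (G : Polynomial F) (hG : G = ∏ ℓ : Fin n, (X - C (a ℓ)))
    (R : Polynomial F) (hRdeg : R.degree < n) (hR : ∀ ℓ, R.eval (a ℓ) = b ℓ) :
    ∀ s : ℕ, 1 ≤ s →
      chi F t k R G s s =
        (Lam F t k * liftP F t k R + Om F t k R G * liftP F t k G) ^ s :=
  stmt7_general F n t k a G hG R
end

section
/- (Lemma 3 of the paper, first identity.) For all integers s ≥ 1 and u with 0 ≤ u ≤ s−1, one has the polynomial identity χ(s,u)·P − χ(s,u+1) = Λ^{s−u−1} · (Λ·R + Ω·G)^u · (Λ·P − Λ·R − Ω·G) in A[X]. -/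
open Polynomial

/-
Since `Ω` is minus the quotient of `Λ·R` by `G`, the polynomial `B := Λ·R + Ω·G` is the remainder
of `Λ·R` modulo `G`, so `deg B^s < deg G^s`. The sum defining `χ(s,s)` is the binomial expansion of
`B^s = (Λ·R + Ω·G)^s` without its last term `(Ω·G)^s`, which vanishes modulo `G^s`; hence
`χ(s,s) = B^s`, so `χ(s,u) = Λ^{s-u}·B^u` for all `u ≤ s` and the identity is a ring identity.
-/

theorem Polynomial.degree_pow_lt_degree_pow {R : Type*} [CommRing R] {p q : R[X]} (hq : q.Monic)
    (hpq : p.degree < q.degree) {m : ℕ} (hm : m ≠ 0) : (p ^ m).degree < (q ^ m).degree := by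
  cases subsingleton_or_nontrivial R
  · simp [Subsingleton.elim p 0, Subsingleton.elim q 0] at hpq
  by_cases hp : p = 0
  · simpa [hp, zero_pow hm, bot_lt_iff_ne_bot] using (hq.pow m).ne_zero
  apply degree_lt_degree
  calc (p ^ m).natDegree ≤ m * p.natDegree := natDegree_pow_le
    _ < m * q.natDegree := Nat.mul_lt_mul_of_pos_left (natDegree_lt_natDegree hp hpq) (by omega)
    _ = (q ^ m).natDegree := (hq.natDegree_pow m).symm

theorem sum_range_choose_nsmul_add_pow {R : Type*} [CommSemiring R] (x y : R) (m : ℕ) :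
    ∑ i ∈ Finset.range m, m.choose i • (x ^ (m - i) * y ^ i) + y ^ m = (x + y) ^ m := by
  rw [add_comm x, add_pow, Finset.sum_range_succ]
  simp [nsmul_eq_mul, mul_comm]

section

variable {F : Type*} [Field F] {t k : ℕ} {R G : Polynomial F}

local notation "Λ" => Lam F t k
local notation "Ω" => Om F t k R G

theorem lam_mul_liftP_add_om_mul_liftP :
    Λ * liftP F t k R + Ω * liftP F t k G = (Λ * liftP F t k R) %ₘ liftP F t k G := by
  rw [Om]
  linear_combination -modByMonic_add_div (Λ * liftP F t k R) (liftP F t k G)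

theorem chi_of_lt {s u : ℕ} (h : u < s) :
    chi F t k R G s u = Λ ^ (s - u) * (Λ * liftP F t k R + Ω * liftP F t k G) ^ u :=
  if_pos h

theorem chi_self (hG : G.Monic) {s : ℕ} (hs : s ≠ 0) :
    chi F t k R G s s = (Λ * liftP F t k R + Ω * liftP F t k G) ^ s := by
  have hGl : (liftP F t k G).Monic := hG.map _
  have hbinom : ∑ i ∈ Finset.range s, s.choose i •
      (Λ ^ (s - i) * liftP F t k R ^ (s - i) * Ω ^ i * liftP F t k G ^ i) =
      (Λ * liftP F t k R + Ω * liftP F t k G) ^ s - Ω ^ s * liftP F t k G ^ s := by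
    rw [eq_sub_iff_add_eq, ← mul_pow, ← sum_range_choose_nsmul_add_pow]
    simp only [mul_pow, mul_assoc]
  have hdeg : ((Λ * liftP F t k R + Ω * liftP F t k G) ^ s).degree < (liftP F t k G ^ s).degree :=
    degree_pow_lt_degree_pow hGl
      (by rw [lam_mul_liftP_add_om_mul_liftP]; exact degree_modByMonic_lt _ hGl) hs
  rw [chi, if_neg (lt_irrefl s), hbinom, sub_modByMonic, mul_self_modByMonic (hGl.pow s),
    sub_zero, (modByMonic_eq_self_iff (hGl.pow s)).2 hdeg]

theorem chi_succ_of_lt (hG : G.Monic) {s u : ℕ} (h : u < s) :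
    chi F t k R G s (u + 1) =
      Λ ^ (s - u - 1) * (Λ * liftP F t k R + Ω * liftP F t k G) ^ (u + 1) := by
  rcases (Nat.succ_le_of_lt h).lt_or_eq with h' | rfl
  · exact chi_of_lt h'
  · simp [chi_self hG u.succ_ne_zero]

end

theorem stmt8_general (F : Type*) [Field F] (n t k : ℕ)
    (a : Fin n → F)
    (G : Polynomial F) (hG : G = ∏ ℓ : Fin n, (X - C (a ℓ)))
    (R : Polynomial F) :
    ∀ s u : ℕ, 1 ≤ s → u ≤ s - 1 →
      chi F t k R G s u * Pp F t k - chi F t k R G s (u + 1) =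
        Lam F t k ^ (s - u - 1) *
          (Lam F t k * liftP F t k R + Om F t k R G * liftP F t k G) ^ u *
          (Lam F t k * Pp F t k - Lam F t k * liftP F t k R -
            Om F t k R G * liftP F t k G) := by
  intro s u hs hu
  have hGm : G.Monic := hG ▸ monic_prod_of_monic _ _ fun ℓ _ => monic_X_sub_C (a ℓ)
  have hus : u < s := by omega
  rw [chi_of_lt hus, chi_succ_of_lt hGm hus, ← pow_sub_one_mul (Nat.sub_ne_zero_of_lt hus)]
  ring

/-- Lemma 3, first identity: for `0 ≤ u ≤ s−1`,
`χ(s,u)·P − χ(s,u+1) = Λ^{s−u−1}·(Λ·R + Ω·G)^u·(Λ·P − Λ·R − Ω·G)`. -/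
theorem stmt8 (F : Type*) [Field F] (n t k : ℕ) (hn : 0 < n) (ht : 1 ≤ t) (hk : 1 ≤ k)
    (a b : Fin n → F) (ha : Function.Injective a)
    (G : Polynomial F) (hG : G = ∏ ℓ : Fin n, (X - C (a ℓ)))
    (R : Polynomial F) (hRdeg : R.degree < n) (hR : ∀ ℓ, R.eval (a ℓ) = b ℓ) :
    ∀ s u : ℕ, 1 ≤ s → u ≤ s - 1 →
      chi F t k R G s u * Pp F t k - chi F t k R G s (u + 1) =
        Lam F t k ^ (s - u - 1) *
          (Lam F t k * liftP F t k R + Om F t k R G * liftP F t k G) ^ u *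
          (Lam F t k * Pp F t k - Lam F t k * liftP F t k R -
            Om F t k R G * liftP F t k G) :=
  stmt8_general F n t k a G hG R
end

section
/- (Lemma 3 of the paper, second identity.) For all integers s ≥ 1 and u ≥ s, the remainders modulo G^s satisfy (χ(s,u)·P − χ(s,u+1)) mod G^s = ((Λ·P − Λ·R − Ω·G) · Σ_{i=0}^{s−1} binom(u,i) Λ^{s−1−i} R^{u−i} Ω^i G^i) mod G^s. -/
open Polynomial

/-!
Write `S(e, u) := Σ_{i ≤ m} binom(u,i) Λ^{e-i} R^{u-i} Ω^i G^i` with `s = m + 1`, so that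
`χ(s,u) = S(s,u) mod G^s` for `u ≥ s`. Splitting `binom(u+1,i) = binom(u,i) + binom(u,i-1)` in
`S(s,u+1)` and factoring out `Λ·R` resp. `Ω·G` gives, as an identity in any commutative ring,
`S(s,u)·P − S(s,u+1) = (Λ·P − Λ·R − Ω·G)·S(s−1,u) + binom(u,m) R^{u−m} Ω^s G^s`,
whose last term vanishes modulo `G^s`.
-/

theorem sum_range_choose_smul_pascal {M : Type*} [AddCommMonoid M] (g : ℕ → M) (u m : ℕ) :
    ∑ i ∈ Finset.range (m + 1), u.choose i • g i
        + ∑ i ∈ Finset.range (m + 1), u.choose i • g (i + 1)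
      = ∑ i ∈ Finset.range (m + 1), (u + 1).choose i • g i + u.choose m • g (m + 1) := by
  induction m with
  | zero => simp
  | succ m ih =>
    rw [Finset.sum_range_succ _ (m + 1), Finset.sum_range_succ _ (m + 1),
      Finset.sum_range_succ _ (m + 1), add_add_add_comm, ih, Nat.choose_succ_succ, add_smul]
    abel

theorem truncated_binomial_mul_sub_succ {A : Type*} [CommRing A] (L R O G P : A) (u m : ℕ) :
    (∑ i ∈ Finset.range (m + 1), u.choose i • (L ^ (m + 1 - i) * R ^ (u - i) * O ^ i * G ^ i)) * P
        - ∑ i ∈ Finset.range (m + 1),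
            (u + 1).choose i • (L ^ (m + 1 - i) * R ^ (u + 1 - i) * O ^ i * G ^ i)
      = (L * P - L * R - O * G) *
          ∑ i ∈ Finset.range (m + 1), u.choose i • (L ^ (m - i) * R ^ (u - i) * O ^ i * G ^ i)
        + (u.choose m • (R ^ (u - m) * O ^ (m + 1))) * G ^ (m + 1) := by
  set S := ∑ i ∈ Finset.range (m + 1), u.choose i • (L ^ (m - i) * R ^ (u - i) * O ^ i * G ^ i)
  set g : ℕ → A := fun j ↦ L ^ (m + 1 - j) * R ^ (u + 1 - j) * O ^ j * G ^ j
  have hL : ∑ i ∈ Finset.range (m + 1), u.choose i • (L ^ (m + 1 - i) * R ^ (u - i) * O ^ i * G ^ i)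
      = L * S := by
    rw [Finset.mul_sum]
    refine Finset.sum_congr rfl fun i hi ↦ ?_
    rw [Nat.sub_add_comm (Finset.mem_range_succ_iff.1 hi), pow_succ]
    ring
  have hLR : L * R * S = ∑ i ∈ Finset.range (m + 1), u.choose i • g i := by
    rw [Finset.mul_sum]
    refine Finset.sum_congr rfl fun i hi ↦ ?_
    rcases le_or_gt i u with hiu | hui
    · simp only [g, Nat.sub_add_comm (Finset.mem_range_succ_iff.1 hi), Nat.sub_add_comm hiu]
      ring
    · simp [Nat.choose_eq_zero_of_lt hui]
  have hOG : O * G * S = ∑ i ∈ Finset.range (m + 1), u.choose i • g (i + 1) := by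
    rw [Finset.mul_sum]
    refine Finset.sum_congr rfl fun i _ ↦ ?_
    simp only [g, Nat.add_sub_add_right]
    ring
  have hg : g (m + 1) = R ^ (u - m) * O ^ (m + 1) * G ^ (m + 1) := by
    simp [g]
  have pascal := sum_range_choose_smul_pascal g u m
  rw [hg] at pascal
  have hSu1 : ∑ i ∈ Finset.range (m + 1),
      (u + 1).choose i • (L ^ (m + 1 - i) * R ^ (u + 1 - i) * O ^ i * G ^ i)
      = ∑ i ∈ Finset.range (m + 1), (u + 1).choose i • g i := rfl
  rw [hL, hSu1]
  linear_combination hLR + hOG + pascal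

theorem Polynomial.modByMonic_mul_sub_modByMonic {A : Type*} [CommRing A] {q : A[X]}
    (hq : q.Monic) (p₁ p₂ r : A[X]) : (p₁ %ₘ q * r - p₂ %ₘ q) %ₘ q = (p₁ * r - p₂) %ₘ q := by
  refine modByMonic_eq_of_dvd_sub hq ?_
  rw [show p₁ %ₘ q * r - p₂ %ₘ q - (p₁ * r - p₂) = (p₁ %ₘ q - p₁) * r - (p₂ %ₘ q - p₂) by ring]
  exact dvd_sub (dvd_mul_of_dvd_left (dvd_modByMonic_sub _ _) _) (dvd_modByMonic_sub _ _)

theorem stmt9_general (F : Type*) [Field F] (n t k : ℕ)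
    (a : Fin n → F)
    (G : Polynomial F) (hG : G = ∏ ℓ : Fin n, (X - C (a ℓ)))
    (R : Polynomial F) :
    ∀ s u : ℕ, 1 ≤ s → s ≤ u →
      (chi F t k R G s u * Pp F t k - chi F t k R G s (u + 1)) %ₘ liftP F t k G ^ s =
        ((Lam F t k * Pp F t k - Lam F t k * liftP F t k R -
            Om F t k R G * liftP F t k G) *
          ∑ i ∈ Finset.range s, u.choose i •
            (Lam F t k ^ (s - 1 - i) * liftP F t k R ^ (u - i) *
              Om F t k R G ^ i * liftP F t k G ^ i)) %ₘ liftP F t k G ^ s := by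
  intro s u hs hsu
  obtain ⟨m, rfl⟩ : ∃ m, s = m + 1 := ⟨s - 1, by omega⟩
  have hG_monic : G.Monic := hG ▸ monic_prod_of_monic _ _ fun ℓ _ ↦ monic_X_sub_C (a ℓ)
  have hQ : (liftP F t k G ^ (m + 1)).Monic := (hG_monic.map _).pow _
  rw [chi, chi, if_neg (by omega), if_neg (by omega), Nat.add_sub_cancel,
    modByMonic_mul_sub_modByMonic hQ, truncated_binomial_mul_sub_succ, add_modByMonic,
    mul_self_modByMonic hQ, add_zero]

/-- Lemma 3, second identity: for `u ≥ s`,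
`(χ(s,u)·P − χ(s,u+1)) mod G^s
  = ((Λ·P − Λ·R − Ω·G) · Σ_{i=0}^{s−1} binom(u,i) Λ^{s−1−i} R^{u−i} Ω^i G^i) mod G^s`. -/
theorem stmt9 (F : Type*) [Field F] (n t k : ℕ) (hn : 0 < n) (ht : 1 ≤ t) (hk : 1 ≤ k)
    (a b : Fin n → F) (ha : Function.Injective a)
    (G : Polynomial F) (hG : G = ∏ ℓ : Fin n, (X - C (a ℓ)))
    (R : Polynomial F) (hRdeg : R.degree < n) (hR : ∀ ℓ, R.eval (a ℓ) = b ℓ) :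
    ∀ s u : ℕ, 1 ≤ s → s ≤ u →
      (chi F t k R G s u * Pp F t k - chi F t k R G s (u + 1)) %ₘ liftP F t k G ^ s =
        ((Lam F t k * Pp F t k - Lam F t k * liftP F t k R -
            Om F t k R G * liftP F t k G) *
          ∑ i ∈ Finset.range s, u.choose i •
            (Lam F t k ^ (s - 1 - i) * liftP F t k R ^ (u - i) *
              Om F t k R G ^ i * liftP F t k G ^ i)) %ₘ liftP F t k G ^ s :=
  stmt9_general F n t k a G hG R
end

section
/- (Equation (15) in the proof of Lemma 3.) For all integers s ≥ 1 and u ≥ s, χ(s,u+1) = ((Λ·R + Ω·G) · Σ_{i=0}^{s−1} binom(u,i) Λ^{s−1−i} R^{u−i} Ω^i G^i) mod G^s. -/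
open Polynomial

lemma sum_shift_aux {A : Type*} [AddCommGroup A] (s : ℕ) (h : ℕ → A) :
    ∑ i ∈ Finset.range s, h (i + 1) =
      (∑ i ∈ Finset.range s, h i) + h s - h 0 := by
  have h1 := Finset.sum_range_succ' h s
  have h2 := Finset.sum_range_succ h s
  rw [h2] at h1
  rw [eq_sub_iff_add_eq, ← h1]

lemma sum_pascal_aux {A : Type*} [AddCommMonoid A] (u m : ℕ) (T : ℕ → A) :
    ∑ i ∈ Finset.range (m + 1), (u.choose i • T i + u.choose (i - 1) • T i) =
      (∑ i ∈ Finset.range (m + 1), (u + 1).choose i • T i) + T 0 := by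
  rw [Finset.sum_range_succ' (fun i => u.choose i • T i + u.choose (i - 1) • T i) m,
      Finset.sum_range_succ' (fun i => (u + 1).choose i • T i) m]
  simp only [Nat.add_sub_cancel, Nat.choose_succ_succ, Nat.choose_zero_right, Nat.zero_sub,
    one_smul, add_smul]
  rw [Finset.sum_congr rfl (fun i _ => by rw [add_comm (u.choose (i+1) • T (i+1))])]
  abel

/-- equation (15): for `u ≥ s`,
`χ(s,u+1) = ((Λ·R + Ω·G) · Σ_{i=0}^{s−1} binom(u,i) Λ^{s−1−i} R^{u−i} Ω^i G^i) mod G^s`. -/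
theorem stmt10 (F : Type*) [Field F] (n t k : ℕ) (hn : 0 < n) (ht : 1 ≤ t) (hk : 1 ≤ k)
    (a b : Fin n → F) (ha : Function.Injective a)
    (G : Polynomial F) (hG : G = ∏ ℓ : Fin n, (X - C (a ℓ)))
    (R : Polynomial F) (hRdeg : R.degree < n) (hR : ∀ ℓ, R.eval (a ℓ) = b ℓ) :
    ∀ s u : ℕ, 1 ≤ s → s ≤ u →
      chi F t k R G s (u + 1) =
        ((Lam F t k * liftP F t k R + Om F t k R G * liftP F t k G) *
          ∑ i ∈ Finset.range s, u.choose i •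
            (Lam F t k ^ (s - 1 - i) * liftP F t k R ^ (u - i) *
              Om F t k R G ^ i * liftP F t k G ^ i)) %ₘ liftP F t k G ^ s := by
  intro s u hs hsu
  set L := Lam F t k with hL
  set Rr := liftP F t k R with hRr
  set O := Om F t k R G with hO
  set Gg := liftP F t k G with hGg
  have hGm : G.Monic := by
    rw [hG]; exact monic_prod_of_monic _ _ fun i _ => monic_X_sub_C _
  have hGgm : Gg.Monic := hGm.map _
  have hm : (Gg ^ s).Monic := hGgm.pow s
  rw [chi, if_neg (by omega)]
  have key : (L * Rr + O * Gg) *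
        (∑ i ∈ Finset.range s, u.choose i • (L ^ (s - 1 - i) * Rr ^ (u - i) * O ^ i * Gg ^ i))
      = (∑ i ∈ Finset.range s,
          (u + 1).choose i • (L ^ (s - i) * Rr ^ (u + 1 - i) * O ^ i * Gg ^ i))
        + u.choose (s - 1) • (Rr ^ (u + 1 - s) * O ^ s * Gg ^ s) := by
    have e1 : ∀ i ∈ Finset.range s,
        (L * Rr) * (u.choose i • (L ^ (s - 1 - i) * Rr ^ (u - i) * O ^ i * Gg ^ i))
        = u.choose i • (L ^ (s - i) * Rr ^ (u + 1 - i) * O ^ i * Gg ^ i) := by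
      intro i hi
      rw [Finset.mem_range] at hi
      have h1 : s - i = (s - 1 - i) + 1 := by omega
      have h2 : u + 1 - i = (u - i) + 1 := by omega
      rw [h1, h2, pow_succ, pow_succ]
      simp only [nsmul_eq_mul]; ring
    have e2 : ∀ i ∈ Finset.range s,
        (O * Gg) * (u.choose i • (L ^ (s - 1 - i) * Rr ^ (u - i) * O ^ i * Gg ^ i))
        = u.choose ((i + 1) - 1) •
            (L ^ (s - (i + 1)) * Rr ^ (u + 1 - (i + 1)) * O ^ (i + 1) * Gg ^ (i + 1)) := by
      intro i hi
      rw [Finset.mem_range] at hi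
      have h1 : s - (i + 1) = s - 1 - i := by omega
      have h2 : u + 1 - (i + 1) = u - i := by omega
      have h3 : (i + 1) - 1 = i := by omega
      rw [h1, h2, h3, pow_succ, pow_succ]
      simp only [nsmul_eq_mul]; ring
    rw [add_mul, Finset.mul_sum, Finset.mul_sum,
        Finset.sum_congr rfl e1, Finset.sum_congr rfl e2]
    have shift :
        ∑ i ∈ Finset.range s, u.choose ((i + 1) - 1) •
            (L ^ (s - (i + 1)) * Rr ^ (u + 1 - (i + 1)) * O ^ (i + 1) * Gg ^ (i + 1))
        = (∑ i ∈ Finset.range s, u.choose (i - 1) •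
            (L ^ (s - i) * Rr ^ (u + 1 - i) * O ^ i * Gg ^ i))
          + u.choose (s - 1) • (L ^ (s - s) * Rr ^ (u + 1 - s) * O ^ s * Gg ^ s)
          - u.choose (0 - 1) • (L ^ (s - 0) * Rr ^ (u + 1 - 0) * O ^ 0 * Gg ^ 0) :=
      sum_shift_aux s (fun j => u.choose (j - 1) •
        (L ^ (s - j) * Rr ^ (u + 1 - j) * O ^ j * Gg ^ j))
    rw [shift]
    obtain ⟨m, rfl⟩ : ∃ m, s = m + 1 := ⟨s - 1, by omega⟩
    have pascal := sum_pascal_aux u m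
      (fun i => L ^ (m + 1 - i) * Rr ^ (u + 1 - i) * O ^ i * Gg ^ i)
    rw [Finset.sum_add_distrib] at pascal
    simp only [Nat.sub_self, pow_zero, one_mul, mul_one, Nat.zero_sub,
      Nat.choose_zero_right, one_smul, Nat.sub_zero] at pascal ⊢
    linear_combination pascal
  rw [key, Polynomial.add_modByMonic]
  have hz : (u.choose (s - 1) • (Rr ^ (u + 1 - s) * O ^ s * Gg ^ s)) %ₘ Gg ^ s = 0 := by
    rw [Polynomial.modByMonic_eq_zero_iff_dvd hm, nsmul_eq_mul]
    exact ((dvd_mul_left _ _).mul_left _)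
  rw [hz, add_zero]
end
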